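/- arXiv:0904.2689 — 2 statements merged into one kernel-verified Lean document; each statement's English description precedes it below -/
import Mathlib

section
/- Let ρ_sc be the semicircle density with parameter v > 0. Then for every z with Im z > 0, the Stieltjes transform ∫ ρ_sc(λ)/(λ - z) dλ equals the solution w(z) of v²w² + zw + 1 = 0 with Im w(z) > 0, namely w(z) = (-z + √(z² - 4v²))/(2v²) with the branch of the square root chosen so that Im w(z) > 0. -/
/-!
Substituting `λ = -2v cos θ` turns the transform into an integral over `[0, π]` of
`sin² θ / (cos θ + c)` with `c = z / (2v)`, and `q = v w` satisfies `q² + 2cq + 1 = 0`.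
Since `Im q > 0` and `Im c > 0`, this forces `‖q‖ < 1`. Then
`1 - 2q cos θ + q² = (1 - q e^{iθ})(1 - q e^{-iθ}) = -2q (cos θ + c)` with both factors in the
slit plane, so `θ + i (log (1 - q e^{iθ}) - log (1 - q e^{-iθ}))` is a primitive of the kernel
`(1 - q²) / (1 - 2q cos θ + q²)`, whose integral over `[0, π]` is therefore `π`. Writing
`sin² θ / (cos θ + c)` through this kernel gives `-π q`, and undoing the scalings gives `w`.
-/

open MeasureTheory Complex
open scoped Real

theorem norm_lt_one_of_sq_add_two_mul_add_one_eq_zero {q c : ℂ} (h : q ^ 2 + 2 * c * q + 1 = 0)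
    (hq : 0 < q.im) (hc : 0 < c.im) : ‖q‖ < 1 := by
  have hre := congrArg re h
  have him := congrArg im h
  simp only [pow_two, add_re, mul_re, add_im, mul_im, re_ofNat, im_ofNat, one_re, one_im,
    zero_re, zero_im] at hre him
  have key : q.im * (1 - normSq q) = 2 * c.im * normSq q := by
    rw [normSq_apply]
    linear_combination q.im * hre - q.re * him
  have hN : 0 < normSq q := normSq_pos.2 fun h0 => by simp [h0] at hq
  have : 0 < 1 - normSq q := pos_of_mul_pos_right (key ▸ by positivity) hq.le
  rw [← sq_lt_one_iff₀ (norm_nonneg q), Complex.sq_norm]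
  linarith

section Kernel

variable {q : ℂ}

lemma one_sub_mul_exp_mem_slitPlane (hq : ‖q‖ < 1) (x : ℝ) : 1 - q * exp (x * I) ∈ slitPlane := by
  rw [sub_eq_add_neg]
  exact mem_slitPlane_of_norm_lt_one (by simpa [norm_exp_ofReal_mul_I] using hq)

lemma one_sub_mul_exp_mul_one_sub_mul_exp_neg (q : ℂ) (x : ℝ) :
    (1 - q * exp (x * I)) * (1 - q * exp (-x * I)) = 1 - 2 * q * Real.cos x + q ^ 2 := by
  have hprod : exp (x * I) * exp (-x * I) = 1 := by rw [← exp_add]; simp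
  rw [ofReal_cos]
  linear_combination q ^ 2 * hprod + q * two_cos (x : ℂ)

lemma one_sub_two_mul_cos_add_sq_ne_zero (hq : ‖q‖ < 1) (x : ℝ) :
    1 - 2 * q * Real.cos x + q ^ 2 ≠ 0 := by
  rw [← one_sub_mul_exp_mul_one_sub_mul_exp_neg]
  refine mul_ne_zero (slitPlane_ne_zero (one_sub_mul_exp_mem_slitPlane hq x)) ?_
  simpa using slitPlane_ne_zero (one_sub_mul_exp_mem_slitPlane hq (-x))

lemma hasDerivAt_log_one_sub_mul_exp (hq : ‖q‖ < 1) (x : ℝ) :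
    HasDerivAt (fun t : ℝ => log (1 - q * exp (t * I)))
      (-(q * exp (x * I) * I) / (1 - q * exp (x * I))) x := by
  have h : HasDerivAt (fun t : ℝ => 1 - q * exp (t * I)) (-(q * (exp (x * I) * (1 * I)))) x :=
    (((hasDerivAt_id x).ofReal_comp.mul_const I).cexp.const_mul q).const_sub 1
  simpa [mul_assoc] using h.clog_real (one_sub_mul_exp_mem_slitPlane hq x)

lemma hasDerivAt_log_one_sub_mul_exp_neg (hq : ‖q‖ < 1) (x : ℝ) :
    HasDerivAt (fun t : ℝ => log (1 - q * exp (-t * I)))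
      (q * exp (-x * I) * I / (1 - q * exp (-x * I))) x := by
  have h := (hasDerivAt_log_one_sub_mul_exp hq (-x)).scomp x (hasDerivAt_neg x)
  simpa [Function.comp_def, neg_div] using h

lemma integral_one_sub_sq_div_one_sub_two_mul_cos_add_sq (hq : ‖q‖ < 1) :
    ∫ x in 0..π, (1 - q ^ 2) / (1 - 2 * q * Real.cos x + q ^ 2) = (π : ℂ) := by
  have hprimitive (x : ℝ) : HasDerivAt
      (fun t : ℝ => (t : ℂ) + I * (log (1 - q * exp (t * I)) - log (1 - q * exp (-t * I))))
      ((1 - q ^ 2) / (1 - 2 * q * Real.cos x + q ^ 2)) x := by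
    refine ((hasDerivAt_id x).ofReal_comp.add (((hasDerivAt_log_one_sub_mul_exp hq x).sub
      (hasDerivAt_log_one_sub_mul_exp_neg hq x)).const_mul I)).congr_deriv ?_
    have huu : q * exp (x * I) * (q * exp (-x * I)) = q ^ 2 := by
      rw [mul_mul_mul_comm, ← exp_add]; simp [sq]
    rw [← one_sub_mul_exp_mul_one_sub_mul_exp_neg, ← huu]
    have hA := slitPlane_ne_zero (one_sub_mul_exp_mem_slitPlane hq x)
    have hB : 1 - q * exp (-x * I) ≠ 0 := by
      simpa using slitPlane_ne_zero (one_sub_mul_exp_mem_slitPlane hq (-x))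
    generalize q * exp (x * I) = u at hA ⊢
    generalize q * exp (-x * I) = u' at hB ⊢
    push_cast
    field_simp
    linear_combination (2 * u * u' - u' - u) * I_sq
  have hcont : Continuous fun x : ℝ => (1 - q ^ 2) / (1 - 2 * q * Real.cos x + q ^ 2) :=
    continuous_const.div (by fun_prop) (one_sub_two_mul_cos_add_sq_ne_zero hq)
  rw [intervalIntegral.integral_eq_sub_of_hasDerivAt (fun x _ => hprimitive x)
    (hcont.intervalIntegrable _ _)]
  simp [exp_pi_mul_I]

lemma integral_sin_sq_div_cos_add {c : ℂ} (hq : ‖q‖ < 1) (hc : q ^ 2 + 2 * c * q + 1 = 0) :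
    ∫ x in 0..π, (Real.sin x : ℂ) ^ 2 / (Real.cos x + c) = -π * q := by
  have hq0 : q ≠ 0 := by rintro rfl; simp at hc
  have hfactor (x : ℝ) : 1 - 2 * q * Real.cos x + q ^ 2 = -(2 * q) * (Real.cos x + c) := by
    linear_combination hc
  have hsplit (x : ℝ) : (Real.sin x : ℂ) ^ 2 / (Real.cos x + c) =
      (1 - q ^ 2) / (2 * q) * ((1 - q ^ 2) / (1 - 2 * q * Real.cos x + q ^ 2))
        - Real.cos x + c := by
    have hx := one_sub_two_mul_cos_add_sq_ne_zero hq x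
    rw [hfactor] at hx ⊢
    have hcx : (Real.cos x : ℂ) + c ≠ 0 := right_ne_zero_of_mul hx
    have hsc : (Real.sin x : ℂ) ^ 2 + (Real.cos x : ℂ) ^ 2 = 1 := by
      exact_mod_cast Real.sin_sq_add_cos_sq x
    -- `sin² = (1 - c²) - (cos - c)(cos + c)` and `1 - c² = -(1 - q²)² / (4q²)`
    field_simp
    linear_combination (4 * q ^ 2) * hsc + (1 + q ^ 2 - 2 * q * c) * hc
  have hkernel : IntervalIntegrable
      (fun x : ℝ => (1 - q ^ 2) / (1 - 2 * q * Real.cos x + q ^ 2)) volume 0 π :=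
    (continuous_const.div (by fun_prop)
      (one_sub_two_mul_cos_add_sq_ne_zero hq)).intervalIntegrable _ _
  have hcos : IntervalIntegrable (fun x : ℝ => (Real.cos x : ℂ)) volume 0 π :=
    (by fun_prop : Continuous fun x : ℝ => (Real.cos x : ℂ)).intervalIntegrable _ _
  rw [intervalIntegral.integral_congr fun x _ => hsplit x,
    intervalIntegral.integral_add ((hkernel.const_mul _).sub hcos) intervalIntegrable_const,
    intervalIntegral.integral_sub (hkernel.const_mul _) hcos, intervalIntegral.integral_const_mul,
    integral_one_sub_sq_div_one_sub_two_mul_cos_add_sq hq, intervalIntegral.integral_ofReal,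
    integral_cos, intervalIntegral.integral_const]
  simp only [Real.sin_pi, Real.sin_zero, sub_self, ofReal_zero, sub_zero, real_smul, neg_mul]
  field_simp
  linear_combination hc

end Kernel

lemma integral_sqrt_sq_sub_sq_smul {E : Type*} [NormedAddCommGroup E] [NormedSpace ℝ E]
    {r : ℝ} (hr : 0 ≤ r) (f : ℝ → E) :
    ∫ x, √(r ^ 2 - x ^ 2) • f x = r ^ 2 • ∫ θ in 0..π, Real.sin θ ^ 2 • f (-(r * Real.cos θ)) := by
  have hsupport : ∫ x, √(r ^ 2 - x ^ 2) • f x = ∫ x in -r..r, √(r ^ 2 - x ^ 2) • f x := by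
    rw [intervalIntegral.integral_of_le (by linarith)]
    refine (setIntegral_eq_integral_of_forall_compl_eq_zero fun x hx => ?_).symm
    rw [Set.mem_Ioc, not_and_or, not_lt, not_le] at hx
    rw [Real.sqrt_eq_zero_of_nonpos (by rcases hx with hx | hx <;> nlinarith), zero_smul]
  have hsubst := intervalIntegral.integral_deriv_smul_comp_of_deriv_nonneg
    (f := fun θ => -(r * Real.cos θ)) (f' := fun θ => r * Real.sin θ)
    (g := fun x => √(r ^ 2 - x ^ 2) • f x) (a := 0) (b := π) (by fun_prop)
    (fun θ _ => by simpa using ((Real.hasDerivAt_cos θ).const_mul r).fun_neg)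
    (fun θ hθ => by
      rw [min_eq_left Real.pi_pos.le, max_eq_right Real.pi_pos.le] at hθ
      exact mul_nonneg hr (Real.sin_nonneg_of_nonneg_of_le_pi hθ.1.le hθ.2.le))
  simp only [Real.cos_zero, Real.cos_pi, mul_one, mul_neg, neg_neg] at hsubst
  rw [hsupport, ← hsubst, ← intervalIntegral.integral_smul]
  refine intervalIntegral.integral_congr fun θ hθ => ?_
  rw [Set.uIcc_of_le Real.pi_pos.le] at hθ
  have hsqrt : √(r ^ 2 - (-(r * Real.cos θ)) ^ 2) = r * Real.sin θ := by
    rw [← Real.sqrt_sq (mul_nonneg hr (Real.sin_nonneg_of_nonneg_of_le_pi hθ.1 hθ.2))]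
    congr 1
    linear_combination (-r ^ 2) * Real.sin_sq_add_cos_sq θ
  simp only [Function.comp_apply, hsqrt, smul_smul]
  ring_nf

lemma ite_abs_le_mul_sqrt_sq_sub_sq {r x : ℝ} (hr : 0 ≤ r) (a : ℝ) :
    (if |x| ≤ r then a * √(r ^ 2 - x ^ 2) else 0) = a * √(r ^ 2 - x ^ 2) := by
  rw [ite_eq_left_iff, not_le]
  intro hx
  rw [Real.sqrt_eq_zero_of_nonpos, mul_zero]
  nlinarith [sq_abs x, abs_nonneg x]

/-- The Stieltjes transform of the semicircle density equals the solution `w` of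
`v² w² + z w + 1 = 0` with `Im w > 0`, for `Im z > 0`. -/
theorem semicircle_stieltjes_transform_eq
    (v : ℝ) (hv : 0 < v) (ρ : ℝ → ℝ)
    (hρ : ∀ lam : ℝ, ρ lam =
      if |lam| ≤ 2 * v then (2 * Real.pi * v ^ 2)⁻¹ * Real.sqrt (4 * v ^ 2 - lam ^ 2) else 0)
    (z : ℂ) (hz : 0 < z.im) (w : ℂ)
    (hw : (v : ℂ) ^ 2 * w ^ 2 + z * w + 1 = 0) (hwim : 0 < w.im) :
    (∫ lam : ℝ, (ρ lam : ℂ) / ((lam : ℂ) - z)) = w := by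
  have hv0 : (v : ℂ) ≠ 0 := ofReal_ne_zero.2 hv.ne'
  set c : ℂ := z / (2 * v) with hc
  have hqc : (v * w) ^ 2 + 2 * c * (v * w) + 1 = 0 := by
    rw [hc]; field_simp; linear_combination hw
  have hcim : 0 < c.im := by
    rw [hc, show (2 * v : ℂ) = ((2 * v : ℝ) : ℂ) by push_cast; ring, div_ofReal_im]
    positivity
  have hq : ‖(v : ℂ) * w‖ < 1 :=
    norm_lt_one_of_sq_add_two_mul_add_one_eq_zero hqc (by simpa using mul_pos hv hwim) hcim
  have hdensity (lam : ℝ) : (ρ lam : ℂ) / (lam - z) =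
      (2 * π * v ^ 2)⁻¹ • (√((2 * v) ^ 2 - lam ^ 2) • ((lam : ℂ) - z)⁻¹) := by
    rw [hρ, show 4 * v ^ 2 = (2 * v) ^ 2 by ring,
      ite_abs_le_mul_sqrt_sq_sub_sq (by positivity)]
    simp only [real_smul]
    push_cast
    ring
  have hkernel (θ : ℝ) : Real.sin θ ^ 2 • (((-(2 * v * Real.cos θ) : ℝ) : ℂ) - z)⁻¹ =
      -(2 * v : ℂ)⁻¹ * ((Real.sin θ : ℂ) ^ 2 / (Real.cos θ + c)) := by
    have hden : (((-(2 * v * Real.cos θ) : ℝ) : ℂ) - z) = -(2 * v) * (Real.cos θ + c) := by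
      rw [hc]; push_cast; field_simp; ring
    rw [real_smul, hden, mul_inv]
    push_cast
    ring
  calc ∫ lam : ℝ, (ρ lam : ℂ) / ((lam : ℂ) - z)
      = (2 * π * v ^ 2)⁻¹ • (2 * v) ^ 2 •
          ∫ θ in 0..π, Real.sin θ ^ 2 • (((-(2 * v * Real.cos θ) : ℝ) : ℂ) - z)⁻¹ := by
        simp_rw [hdensity]
        rw [integral_smul, integral_sqrt_sq_sub_sq_smul (by positivity)]
    _ = (2 * π * v ^ 2)⁻¹ • (2 * v) ^ 2 •
          (-(2 * v : ℂ)⁻¹ * ∫ θ in 0..π, (Real.sin θ : ℂ) ^ 2 / (Real.cos θ + c)) := by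
        simp_rw [hkernel, intervalIntegral.integral_const_mul]
    _ = w := by
        rw [integral_sin_sq_div_cos_add hq hqc]
        simp only [real_smul]
        push_cast
        field_simp
end

section
/- Let X be a real random variable with E|X|^{q+2} < ∞ and let F : ℝ → ℂ be a smooth function with bounded derivatives up to order q+1. Then E[X F(X)] = ∑_{r=0}^{q} (K_{r+1}/r!) E[F^{(r)}(X)] + ε_q, where K_r is the r-th cumulant of X and |ε_q| ≤ C_q · sup_u |F^{(q+1)}(u)| · E|X|^{q+2} for a constant C_q depending only on q. State and prove this for q = 1: E[X F(X)] = K₁E[F(X)] + K₂E[F'(X)] + ε₁ with |ε₁| ≤ C·sup|F''|·E|X|³. -/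
/-!
Expand `F` to first order at `0`: `F u = F 0 + u F'(0) + r₂(u)` with `‖r₂(u)‖ ≤ M u²`, and
`F'(u) = F'(0) + r₁(u)` with `‖r₁(u)‖ ≤ M |u|`. The affine part of `F` is reproduced exactly by
`K₁ E[F(X)] + K₂ E[F'(X)]` (the covariance of `X` with `u F'(0)` is `K₂ F'(0)`), so the defect is
`Cov(X, r₂(X)) - K₂ E[r₁(X)]`. Each term is at most `M E|X| E[X²]` or `M E|X|³`, and
`E|X| E[X²] ≤ E|X|³`.
-/

open MeasureTheory ProbabilityTheory

section Taylor

variable {E : Type*} [NormedAddCommGroup E] [NormedSpace ℝ E] {f : ℝ → E} {M : ℝ}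

lemma norm_deriv_sub_deriv_zero_le (hf : Differentiable ℝ (deriv f))
    (hM : ∀ u, ‖deriv (deriv f) u‖ ≤ M) (x : ℝ) :
    ‖deriv f x - deriv f 0‖ ≤ M * |x| := by
  simpa using convex_univ.norm_image_sub_le_of_norm_deriv_le (fun u _ => hf u) (fun u _ => hM u)
    (Set.mem_univ 0) (Set.mem_univ x)

lemma norm_sub_sub_smul_deriv_zero_le (hf : Differentiable ℝ f)
    (hf' : Differentiable ℝ (deriv f)) (hM : ∀ u, ‖deriv (deriv f) u‖ ≤ M) (x : ℝ) :
    ‖f x - f 0 - x • deriv f 0‖ ≤ M * x ^ 2 := by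
  have hderiv : ∀ t, HasDerivAt (fun t => f t - t • deriv f 0) (deriv f t - deriv f 0) t :=
    fun t => (hf t).hasDerivAt.sub (by simpa using (hasDerivAt_id t).smul_const (deriv f 0))
  have hball : ∀ t ∈ Metric.closedBall (0 : ℝ) |x|, ‖deriv f t - deriv f 0‖ ≤ M * |x| := by
    intro t ht
    have hM0 : 0 ≤ M := (norm_nonneg _).trans (hM 0)
    rw [Metric.mem_closedBall, Real.dist_0_eq_abs] at ht
    exact (norm_deriv_sub_deriv_zero_le hf' hM t).trans (by gcongr)
  have := (convex_closedBall (0 : ℝ) |x|).norm_image_sub_le_of_norm_hasDerivWithin_le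
    (fun t _ => (hderiv t).hasDerivWithinAt) hball (Metric.mem_closedBall_self (abs_nonneg x))
    (show x ∈ Metric.closedBall (0 : ℝ) |x| by simp)
  simpa [sub_right_comm _ (f 0), mul_assoc, ← sq, sq_abs] using this

lemma norm_ofReal_mul_le_of_norm_le_mul_sq {g : ℝ → ℂ} (hgM : ∀ u, ‖g u‖ ≤ M * u ^ 2) (u : ℝ) :
    ‖(u : ℂ) * g u‖ ≤ M * |u| ^ 3 := by
  rw [norm_mul, Complex.norm_real, Real.norm_eq_abs]
  calc |u| * ‖g u‖ ≤ |u| * (M * u ^ 2) := by gcongr; exact hgM u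
    _ = M * |u| ^ 3 := by rw [← sq_abs u]; ring

end Taylor

section Integrals

variable {Ω : Type*} [MeasurableSpace Ω] {μ : Measure Ω} {X : Ω → ℝ} {M : ℝ}

lemma integrable_abs_pow_three (hX : MemLp X 3 μ) : Integrable (fun ω => |X ω| ^ 3) μ :=
  hX.integrable_norm_pow (by norm_num)

lemma integrable_comp_of_norm_le {E : Type*} [NormedAddCommGroup E] {g : ℝ → E}
    (hg : Continuous g) (hX : AEStronglyMeasurable X μ) {φ : ℝ → ℝ}
    (hφ : Integrable (fun ω => φ (X ω)) μ) (hgφ : ∀ u, ‖g u‖ ≤ φ u) :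
    Integrable (fun ω => g (X ω)) μ :=
  hφ.mono' (hg.comp_aestronglyMeasurable hX) (ae_of_all _ fun ω => hgφ (X ω))

lemma integral_mul_ofReal_add {f : Ω → ℝ} {g : Ω → ℂ} (hf : Integrable f μ) (hg : Integrable g μ)
    (c : ℂ) : ∫ ω, (c * f ω + g ω) ∂μ = c * (∫ ω, f ω ∂μ : ℝ) + ∫ ω, g ω ∂μ := by
  rw [integral_add (f := fun ω => c * (f ω : ℂ)) (hf.ofReal.const_mul c) hg, integral_const_mul,
    integral_complex_ofReal]

variable [IsProbabilityMeasure μ]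

lemma sq_integral_le_integral_sq (hX : MemLp X 2 μ) : (∫ ω, X ω ∂μ) ^ 2 ≤ ∫ ω, X ω ^ 2 ∂μ := by
  simpa [variance_eq_sub hX] using variance_nonneg X μ

lemma abs_integral_sq_sub_sq_integral_le (hX : MemLp X 2 μ) :
    |(∫ ω, X ω ^ 2 ∂μ) - (∫ ω, X ω ∂μ) ^ 2| ≤ ∫ ω, X ω ^ 2 ∂μ := by
  have := sq_integral_le_integral_sq hX
  rw [abs_of_nonneg (by linarith)]
  nlinarith [sq_nonneg (∫ ω, X ω ∂μ)]

/-- Expanding `0 ≤ E[|X| (|X| - E|X|)²]` gives `E|X|³ ≥ 2 E|X| E[X²] - (E|X|)³`, and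
`(E|X|)² ≤ E[X²]`. -/
lemma integral_abs_mul_integral_sq_le (hX : MemLp X 3 μ) :
    (∫ ω, |X ω| ∂μ) * (∫ ω, X ω ^ 2 ∂μ) ≤ ∫ ω, |X ω| ^ 3 ∂μ := by
  set m := ∫ ω, |X ω| ∂μ
  have h1 : Integrable (fun ω => |X ω|) μ := (hX.integrable (by norm_num)).abs
  have h2 : Integrable (fun ω => X ω ^ 2) μ := (hX.mono_exponent (by norm_num)).integrable_sq
  have h3 := integrable_abs_pow_three hX
  have hexpand : ∫ ω, |X ω| * (|X ω| - m) ^ 2 ∂μ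
      = (∫ ω, |X ω| ^ 3 ∂μ) - 2 * m * (∫ ω, X ω ^ 2 ∂μ) + m ^ 2 * m := by
    have hpt : (fun ω => |X ω| * (|X ω| - m) ^ 2)
        = fun ω => |X ω| ^ 3 - 2 * m * X ω ^ 2 + m ^ 2 * |X ω| := by
      ext ω; rw [← sq_abs (X ω)]; ring
    rw [hpt, integral_add (h3.sub' (h2.const_mul _)) (h1.const_mul _),
      integral_sub h3 (h2.const_mul _), integral_const_mul, integral_const_mul]
  have hnonneg : 0 ≤ ∫ ω, |X ω| * (|X ω| - m) ^ 2 ∂μ :=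
    integral_nonneg fun ω => by positivity
  have hm : 0 ≤ m := integral_nonneg fun ω => abs_nonneg _
  have hm2 : m ^ 2 ≤ ∫ ω, X ω ^ 2 ∂μ := by
    simpa using sq_integral_le_integral_sq (hX.mono_exponent (by norm_num)).abs
  nlinarith [mul_le_mul_of_nonneg_left hm2 hm]

/-- Bilinearity of the covariance: `Cov(X, f) = Var(X) c₁ + Cov(X, f - c₀ - X c₁)`. -/
lemma integral_ofReal_mul_sub_eq_variance_mul_add {f : Ω → ℂ} (c₀ c₁ : ℂ)
    (hX1 : Integrable X μ) (hX2 : Integrable (fun ω => X ω ^ 2) μ)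
    (hρ : Integrable (fun ω => f ω - c₀ - X ω • c₁) μ)
    (hXρ : Integrable (fun ω => (X ω : ℂ) * (f ω - c₀ - X ω • c₁)) μ) :
    (∫ ω, (X ω : ℂ) * f ω ∂μ) - ((∫ ω, X ω ∂μ : ℝ) : ℂ) * ∫ ω, f ω ∂μ
      = (((∫ ω, X ω ^ 2 ∂μ) - (∫ ω, X ω ∂μ) ^ 2 : ℝ) : ℂ) * c₁
        + ((∫ ω, (X ω : ℂ) * (f ω - c₀ - X ω • c₁) ∂μ)
          - ((∫ ω, X ω ∂μ : ℝ) : ℂ) * ∫ ω, (f ω - c₀ - X ω • c₁) ∂μ) := by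
  have hXf : ∫ ω, (X ω : ℂ) * f ω ∂μ = c₀ * (∫ ω, X ω ∂μ : ℝ)
      + (c₁ * (∫ ω, X ω ^ 2 ∂μ : ℝ) + ∫ ω, (X ω : ℂ) * (f ω - c₀ - X ω • c₁) ∂μ) := by
    have hpt : ∀ ω, (X ω : ℂ) * f ω = c₀ * (X ω : ℝ)
        + (c₁ * (X ω ^ 2 : ℝ) + (X ω : ℂ) * (f ω - c₀ - X ω • c₁)) := fun ω => by
      rw [Complex.real_smul]; push_cast; ring
    rw [integral_congr_ae (ae_of_all μ hpt), integral_mul_ofReal_add hX1 ?_,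
      integral_mul_ofReal_add hX2 hXρ]
    exact (hX2.ofReal.const_mul c₁).fun_add hXρ
  have hf : ∫ ω, f ω ∂μ
      = c₀ + (c₁ * (∫ ω, X ω ∂μ : ℝ) + ∫ ω, (f ω - c₀ - X ω • c₁) ∂μ) := by
    have hpt : ∀ ω, f ω = c₀ + (c₁ * (X ω : ℝ) + (f ω - c₀ - X ω • c₁)) := fun ω => by
      rw [Complex.real_smul]; ring
    rw [integral_congr_ae (ae_of_all μ hpt), integral_add (integrable_const c₀) ?_,
      integral_mul_ofReal_add hX1 hρ, integral_const, probReal_univ, one_smul]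
    exact (hX1.ofReal.const_mul c₁).fun_add hρ
  rw [hXf, hf]
  push_cast
  ring

lemma norm_integral_comp_sub_le {E : Type*} [NormedAddCommGroup E] [NormedSpace ℝ E]
    [CompleteSpace E] {h : ℝ → E} (hh : Continuous h) (c : E)
    (hhM : ∀ u, ‖h u - c‖ ≤ M * |u|) (hX : Integrable X μ) :
    ‖(∫ ω, h (X ω) ∂μ) - c‖ ≤ M * ∫ ω, |X ω| ∂μ := by
  have hsub := integrable_comp_of_norm_le (hh.sub continuous_const) hX.aestronglyMeasurable
    (hX.abs.const_mul M) hhM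
  have hcomp : Integrable (fun ω => h (X ω)) μ := by simpa using hsub.fun_add (integrable_const c)
  have heq : (∫ ω, h (X ω) ∂μ) - c = ∫ ω, (h (X ω) - c) ∂μ := by
    rw [integral_sub hcomp (integrable_const c), integral_const, probReal_univ, one_smul]
  rw [heq, ← integral_const_mul]
  exact norm_integral_le_of_norm_le (hX.abs.const_mul M) (ae_of_all _ fun ω => hhM (X ω))

lemma norm_integral_ofReal_mul_sub_le {g : ℝ → ℂ} (hgM : ∀ u, ‖g u‖ ≤ M * u ^ 2)
    (hX : MemLp X 3 μ) :
    ‖(∫ ω, (X ω : ℂ) * g (X ω) ∂μ) - ((∫ ω, X ω ∂μ : ℝ) : ℂ) * ∫ ω, g (X ω) ∂μ‖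
      ≤ 2 * M * ∫ ω, |X ω| ^ 3 ∂μ := by
  have hM0 : 0 ≤ M := by simpa using (norm_nonneg _).trans (hgM 1)
  have hX2 : Integrable (fun ω => X ω ^ 2) μ := (hX.mono_exponent (by norm_num)).integrable_sq
  have hX3 := integrable_abs_pow_three hX
  have hXg_le : ‖∫ ω, (X ω : ℂ) * g (X ω) ∂μ‖ ≤ M * ∫ ω, |X ω| ^ 3 ∂μ :=
    (norm_integral_le_of_norm_le (hX3.const_mul M)
      (ae_of_all _ fun ω => norm_ofReal_mul_le_of_norm_le_mul_sq hgM (X ω))).trans_eq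
        (integral_const_mul M _)
  have hg_le : ‖∫ ω, g (X ω) ∂μ‖ ≤ M * ∫ ω, X ω ^ 2 ∂μ :=
    (norm_integral_le_of_norm_le (hX2.const_mul M) (ae_of_all _ fun ω => hgM (X ω))).trans_eq
      (integral_const_mul M _)
  have hmean : |∫ ω, X ω ∂μ| ≤ ∫ ω, |X ω| ∂μ := abs_integral_le_integral_abs
  have hmom := integral_abs_mul_integral_sq_le hX
  calc _ ≤ ‖∫ ω, (X ω : ℂ) * g (X ω) ∂μ‖ + |∫ ω, X ω ∂μ| * ‖∫ ω, g (X ω) ∂μ‖ := by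
        refine (norm_sub_le _ _).trans_eq ?_
        rw [norm_mul, Complex.norm_real, Real.norm_eq_abs]
    _ ≤ M * ∫ ω, |X ω| ^ 3 ∂μ + (∫ ω, |X ω| ∂μ) * (M * ∫ ω, X ω ^ 2 ∂μ) := by gcongr
    _ ≤ 2 * M * ∫ ω, |X ω| ^ 3 ∂μ := by nlinarith

theorem norm_cumulant_expansion_remainder_le (hX : MemLp X 3 μ) {F : ℝ → ℂ}
    (hF : Differentiable ℝ F) (hF' : Differentiable ℝ (deriv F))
    (hM : ∀ u, ‖deriv (deriv F) u‖ ≤ M) :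
    ‖(∫ ω, (X ω : ℂ) * F (X ω) ∂μ)
        - (((∫ ω, X ω ∂μ : ℝ) : ℂ) * (∫ ω, F (X ω) ∂μ)
          + (((∫ ω, (X ω) ^ 2 ∂μ) - (∫ ω, X ω ∂μ) ^ 2 : ℝ) : ℂ) * (∫ ω, deriv F (X ω) ∂μ))‖
      ≤ 3 * M * ∫ ω, |X ω| ^ 3 ∂μ := by
  set K : ℝ := (∫ ω, X ω ^ 2 ∂μ) - (∫ ω, X ω ∂μ) ^ 2
  set r₂ : ℝ → ℂ := fun u => F u - F 0 - u • deriv F 0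
  have hr₂ : ∀ u, ‖r₂ u‖ ≤ M * u ^ 2 := norm_sub_sub_smul_deriv_zero_le hF hF' hM
  have hr₂c : Continuous r₂ := by have := hF.continuous; fun_prop
  have hX1 : Integrable X μ := hX.integrable (by norm_num)
  have hX2 : Integrable (fun ω => X ω ^ 2) μ := (hX.mono_exponent (by norm_num)).integrable_sq
  have hρ := integrable_comp_of_norm_le hr₂c hX.aestronglyMeasurable (hX2.const_mul M) hr₂
  have hXρ := integrable_comp_of_norm_le (Complex.continuous_ofReal.mul hr₂c)
    hX.aestronglyMeasurable ((integrable_abs_pow_three hX).const_mul M)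
    (norm_ofReal_mul_le_of_norm_le_mul_sq hr₂)
  have hcov := norm_integral_ofReal_mul_sub_le hr₂ hX
  have hderiv := norm_integral_comp_sub_le hF'.continuous (deriv F 0)
    (norm_deriv_sub_deriv_zero_le hF' hM) hX1
  have hK : |K| ≤ ∫ ω, X ω ^ 2 ∂μ :=
    abs_integral_sq_sub_sq_integral_le (hX.mono_exponent (by norm_num))
  have hmom := integral_abs_mul_integral_sq_le hX
  have hM0 : 0 ≤ M := (norm_nonneg _).trans (hM 0)
  rw [sub_add_eq_sub_sub,
    integral_ofReal_mul_sub_eq_variance_mul_add (F 0) (deriv F 0) hX1 hX2 hρ hXρ]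
  calc _ = ‖((∫ ω, (X ω : ℂ) * r₂ (X ω) ∂μ) - ((∫ ω, X ω ∂μ : ℝ) : ℂ) * ∫ ω, r₂ (X ω) ∂μ)
        - (K : ℂ) * ((∫ ω, deriv F (X ω) ∂μ) - deriv F 0)‖ := by congr 1; ring
    _ ≤ 2 * M * (∫ ω, |X ω| ^ 3 ∂μ) + (∫ ω, X ω ^ 2 ∂μ) * (M * ∫ ω, |X ω| ∂μ) := by
        refine (norm_sub_le _ _).trans (add_le_add hcov ?_)
        rw [norm_mul, Complex.norm_real, Real.norm_eq_abs]
        gcongr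
    _ ≤ 3 * M * ∫ ω, |X ω| ^ 3 ∂μ := by nlinarith

end Integrals

/-- The cumulant expansion (Stein-type identity with remainder) for `q = 1`:
`E[X F(X)] = K₁ E[F(X)] + K₂ E[F'(X)] + ε₁` with
`|ε₁| ≤ C · sup|F''| · E|X|³` for a universal constant `C`. -/
theorem cumulant_expansion_q_one
    {Ω : Type*} [MeasurableSpace Ω] (μ : Measure Ω) [IsProbabilityMeasure μ] :
    ∃ C : ℝ, 0 < C ∧
      ∀ (X : Ω → ℝ), Measurable X → MemLp X 3 μ →
      ∀ (F : ℝ → ℂ), ContDiff ℝ 2 F →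
      (∀ k : ℕ, k ≤ 2 → ∃ B : ℝ, ∀ u : ℝ, ‖iteratedDeriv k F u‖ ≤ B) →
      ∀ M : ℝ, (∀ u : ℝ, ‖iteratedDeriv 2 F u‖ ≤ M) →
      ‖(∫ ω, (X ω : ℂ) * F (X ω) ∂μ)
          - (((∫ ω, X ω ∂μ : ℝ) : ℂ) * (∫ ω, F (X ω) ∂μ)
            + (((∫ ω, (X ω) ^ 2 ∂μ) - (∫ ω, X ω ∂μ) ^ 2 : ℝ) : ℂ)
                * (∫ ω, deriv F (X ω) ∂μ))‖
        ≤ C * M * ∫ ω, |X ω| ^ 3 ∂μ := by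
  refine ⟨3, by norm_num, fun X _ hX F hF _ M hM => ?_⟩
  exact norm_cumulant_expansion_remainder_le hX (hF.differentiable (by norm_num))
    (by simpa using hF.differentiable_iteratedDeriv 1 (by norm_num))
    (by simpa [iteratedDeriv_succ] using hM)
end
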